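/- At a fixed point it is not possible to improve either the clusters or the centers: let f : ℝ^d × ℝ^d → [0,∞) be convex and differentiable in its first argument and order-preserving with respect to Euclidean distance, let ρ ≥ 1, and let (x*, C*) ∈ ℝ^{Kmd} × C_{m,K,D} be a fixed point of DGC-F_ρ, i.e., C* ∈ U_{x*} and ∇_x J_ρ(x*, C*) = 0. Then J_ρ(x*, C*) ≤ J_ρ(x, C*) for every x ∈ ℝ^{Kmd}, and J_ρ(x*, C*) ≤ J_ρ(x*, C) for every clustering C ∈ C_{m,K,D}. -/

import Mathlib

open Filter Finset
open scoped RealInnerProductSpace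

/-! For fixed clusters, `J_ρ(·, C)` is a sum of graph Dirichlet energies of the centers and of
convex losses, so it lies above its first-order expansion at `x⋆`, whose linear part is built from
the blockwise partial gradients; these vanish at a fixed point. For fixed centers, the loss part of
`J_ρ` is a sum over data points, and `C⋆ ∈ U_{x⋆}` sends each point to a nearest center, which by
order preservation minimizes each summand separately. -/

/-- The relaxed distributed clustering objective `J_ρ(x, C)`. Clusterings are encoded as
assignment maps `C i : Fin (N i) → Fin K` sending each local data point to its cluster. -/
noncomputable def Jrho {d m K : ℕ} (G : SimpleGraph (Fin m)) [DecidableRel G.Adj]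
    {N : Fin m → ℕ} (y : (i : Fin m) → Fin (N i) → EuclideanSpace ℝ (Fin d))
    (f : EuclideanSpace ℝ (Fin d) → EuclideanSpace ℝ (Fin d) → ℝ) (ρ : ℝ)
    (x : Fin m → Fin K → EuclideanSpace ℝ (Fin d))
    (C : (i : Fin m) → Fin (N i) → Fin K) : ℝ :=
  ∑ i, ∑ k,
    ((1 / 2) * ∑ j ∈ G.neighborFinset i, ‖x i k - x j k‖ ^ 2
      + (1 / ρ) * ∑ r ∈ Finset.univ.filter (fun r => C i r = k), f (x i k) (y i r))

/-- `C ∈ U_x`: every data point is assigned to a nearest center. -/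
def inU {d m K : ℕ} {N : Fin m → ℕ}
    (y : (i : Fin m) → Fin (N i) → EuclideanSpace ℝ (Fin d))
    (x : Fin m → Fin K → EuclideanSpace ℝ (Fin d))
    (C : (i : Fin m) → Fin (N i) → Fin K) : Prop :=
  ∀ (i : Fin m) (r : Fin (N i)) (l : Fin K), ‖x i (C i r) - y i r‖ ≤ ‖x i l - y i r‖

/-- `∇_x J_ρ(x, C) = 0`, stated blockwise: the partial gradient of `J_ρ(·, C)` with respect
to each center block `x_i(k)`, namely
`2 ∑_{j ∈ N_i} (x_i(k) - x_j(k)) + (1/ρ) ∑_{r ∈ C_i(k)} ∇_x f(x_i(k), y_{i,r})`,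
vanishes; here `f'` is the gradient of the loss `f` in its first argument. -/
def gradJZero {d m K : ℕ} (G : SimpleGraph (Fin m)) [DecidableRel G.Adj]
    {N : Fin m → ℕ} (y : (i : Fin m) → Fin (N i) → EuclideanSpace ℝ (Fin d))
    (f' : EuclideanSpace ℝ (Fin d) → EuclideanSpace ℝ (Fin d) → EuclideanSpace ℝ (Fin d))
    (ρ : ℝ) (x : Fin m → Fin K → EuclideanSpace ℝ (Fin d))
    (C : (i : Fin m) → Fin (N i) → Fin K) : Prop :=
  ∀ (i : Fin m) (k : Fin K),
    (2 : ℝ) • (∑ j ∈ G.neighborFinset i, (x i k - x j k))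
      + (1 / ρ) • (∑ r ∈ Finset.univ.filter (fun r => C i r = k), f' (x i k) (y i r)) = 0

section FirstOrder

variable {E : Type*} [NormedAddCommGroup E] [InnerProductSpace ℝ E] [CompleteSpace E]

theorem ConvexOn.add_inner_sub_le_of_hasGradientAt {s : Set E} {f : E → ℝ} {g z w : E}
    (hf : ConvexOn ℝ s f) (hz : z ∈ s) (hw : w ∈ s) (hg : HasGradientAt f g z) :
    f z + ⟪g, w - z⟫ ≤ f w := by
  have hline : ConvexOn ℝ (AffineMap.lineMap z w ⁻¹' s) (f ∘ AffineMap.lineMap z w) :=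
    hf.comp_affineMap _
  have hderiv : HasDerivAt (f ∘ AffineMap.lineMap z w) ⟪g, w - z⟫ (0 : ℝ) := by
    have hf' : HasFDerivAt f (InnerProductSpace.toDual ℝ E g)
        (AffineMap.lineMap z w (0 : ℝ)) := by
      simpa using hg.hasFDerivAt
    simpa using hf'.comp_hasDerivAt (0 : ℝ) AffineMap.hasDerivAt_lineMap
  have hslope :=
    hline.le_slope_of_hasDerivAt (x := 0) (y := 1) (by simpa) (by simpa) one_pos hderiv
  simp only [slope_def_field, Function.comp_apply, AffineMap.lineMap_apply_one,
    AffineMap.lineMap_apply_zero, sub_zero, div_one] at hslope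
  linarith

end FirstOrder

namespace SimpleGraph

variable {V E : Type*} [Fintype V] (G : SimpleGraph V) [DecidableRel G.Adj]

theorem sum_sum_neighborFinset_swap {M : Type*} [AddCommMonoid M] (F : V → V → M) :
    ∑ i, ∑ j ∈ G.neighborFinset i, F i j = ∑ i, ∑ j ∈ G.neighborFinset i, F j i := by
  simp_rw [neighborFinset_eq_filter, sum_filter]
  rw [sum_comm]
  simp_rw [G.adj_comm]

variable [NormedAddCommGroup E] [InnerProductSpace ℝ E]

theorem sum_sum_neighborFinset_inner_sub (b v : V → E) :
    ∑ i, ∑ j ∈ G.neighborFinset i, ⟪b i - b j, v i - v j⟫ =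
      ∑ i, ⟪(2 : ℝ) • ∑ j ∈ G.neighborFinset i, (b i - b j), v i⟫ := by
  have hswap : ∑ i, ∑ j ∈ G.neighborFinset i, ⟪b i - b j, v j⟫ =
      -∑ i, ∑ j ∈ G.neighborFinset i, ⟪b i - b j, v i⟫ := by
    rw [G.sum_sum_neighborFinset_swap]
    simp only [← inner_neg_left, neg_sub, ← sum_neg_distrib]
  simp only [real_inner_smul_left, sum_inner, ← mul_sum]
  simp only [inner_sub_right, sum_sub_distrib, hswap]
  ring

noncomputable def dirichletEnergy (b : V → E) : ℝ :=
  (1 / 2) * ∑ i, ∑ j ∈ G.neighborFinset i, ‖b i - b j‖ ^ 2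

theorem dirichletEnergy_add_inner_le (a b : V → E) :
    G.dirichletEnergy b + ∑ i, ⟪(2 : ℝ) • ∑ j ∈ G.neighborFinset i, (b i - b j), a i - b i⟫ ≤
      G.dirichletEnergy a := by
  have hpair : ∀ i j, ‖b i - b j‖ ^ 2 + 2 * ⟪b i - b j, (a i - b i) - (a j - b j)⟫ ≤
      ‖a i - a j‖ ^ 2 := by
    intro i j
    have h := norm_sub_sq_real (a i - a j) (b i - b j)
    have e : (a i - b i) - (a j - b j) = (a i - a j) - (b i - b j) := by abel
    rw [e, inner_sub_right, real_inner_comm, real_inner_self_eq_norm_sq]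
    nlinarith [sq_nonneg ‖a i - a j - (b i - b j)‖]
  have hsum := sum_le_sum fun i (_ : i ∈ univ) =>
    sum_le_sum fun j (_ : j ∈ G.neighborFinset i) => hpair i j
  simp only [sum_add_distrib, ← mul_sum, G.sum_sum_neighborFinset_inner_sub] at hsum
  unfold dirichletEnergy
  linarith

end SimpleGraph

theorem sum_fiberwise_dependent {ι κ M : Type*} [Fintype ι] [Fintype κ] [DecidableEq κ]
    [AddCommMonoid M] (g : ι → κ) (F : κ → ι → M) :
    ∑ k, ∑ r ∈ univ.filter (fun r => g r = k), F k r = ∑ r, F (g r) r := by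
  rw [← sum_fiberwise univ g fun r => F (g r) r]
  refine sum_congr rfl fun k _ => sum_congr rfl fun r hr => ?_
  rw [(mem_filter.1 hr).2]

section Clustering

variable {d m K : ℕ} (G : SimpleGraph (Fin m)) [DecidableRel G.Adj]
  {N : Fin m → ℕ} (y : (i : Fin m) → Fin (N i) → EuclideanSpace ℝ (Fin d))

noncomputable def partialGradJ
    (f' : EuclideanSpace ℝ (Fin d) → EuclideanSpace ℝ (Fin d) → EuclideanSpace ℝ (Fin d))
    (ρ : ℝ) (x : Fin m → Fin K → EuclideanSpace ℝ (Fin d))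
    (C : (i : Fin m) → Fin (N i) → Fin K) (i : Fin m) (k : Fin K) : EuclideanSpace ℝ (Fin d) :=
  (2 : ℝ) • (∑ j ∈ G.neighborFinset i, (x i k - x j k))
    + (1 / ρ) • (∑ r ∈ Finset.univ.filter (fun r => C i r = k), f' (x i k) (y i r))

theorem Jrho_eq_sum_dirichletEnergy_add
    (f : EuclideanSpace ℝ (Fin d) → EuclideanSpace ℝ (Fin d) → ℝ) (ρ : ℝ)
    (x : Fin m → Fin K → EuclideanSpace ℝ (Fin d)) (C : (i : Fin m) → Fin (N i) → Fin K) :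
    Jrho G y f ρ x C =
      ∑ k, G.dirichletEnergy (fun i => x i k) + (1 / ρ) * ∑ i, ∑ r, f (x i (C i r)) (y i r) := by
  simp only [Jrho, SimpleGraph.dirichletEnergy, sum_add_distrib, ← mul_sum]
  rw [sum_comm (f := fun i k => ∑ j ∈ G.neighborFinset i, ‖x i k - x j k‖ ^ 2)]
  simp only [fun i => sum_fiberwise_dependent (C i) fun k r => f (x i k) (y i r)]

theorem sum_inner_partialGradJ
    (f' : EuclideanSpace ℝ (Fin d) → EuclideanSpace ℝ (Fin d) → EuclideanSpace ℝ (Fin d))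
    (ρ : ℝ) (x v : Fin m → Fin K → EuclideanSpace ℝ (Fin d))
    (C : (i : Fin m) → Fin (N i) → Fin K) :
    ∑ i, ∑ k, ⟪partialGradJ G y f' ρ x C i k, v i k⟫ =
      ∑ k, ∑ i, ⟪(2 : ℝ) • ∑ j ∈ G.neighborFinset i, (x i k - x j k), v i k⟫
        + (1 / ρ) * ∑ i, ∑ r, ⟪f' (x i (C i r)) (y i r), v i (C i r)⟫ := by
  simp only [partialGradJ, inner_add_left, sum_add_distrib, real_inner_smul_left, sum_inner,
    ← mul_sum, fun i => sum_fiberwise_dependent (C i) fun k r => ⟪f' (x i k) (y i r), v i k⟫]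
  rw [sum_comm]

theorem Jrho_add_sum_inner_partialGradJ_le
    {f : EuclideanSpace ℝ (Fin d) → EuclideanSpace ℝ (Fin d) → ℝ}
    {f' : EuclideanSpace ℝ (Fin d) → EuclideanSpace ℝ (Fin d) → EuclideanSpace ℝ (Fin d)}
    (hf_convex : ∀ y', ConvexOn ℝ Set.univ (fun x => f x y'))
    (hf_grad : ∀ z y', HasGradientAt (fun x => f x y') (f' z y') z)
    {ρ : ℝ} (hρ : 0 ≤ ρ) (xs x : Fin m → Fin K → EuclideanSpace ℝ (Fin d))
    (C : (i : Fin m) → Fin (N i) → Fin K) :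
    Jrho G y f ρ xs C + ∑ i, ∑ k, ⟪partialGradJ G y f' ρ xs C i k, x i k - xs i k⟫ ≤
      Jrho G y f ρ x C := by
  have hgraph : ∀ k, G.dirichletEnergy (fun i => xs i k)
      + ∑ i, ⟪(2 : ℝ) • ∑ j ∈ G.neighborFinset i, (xs i k - xs j k), x i k - xs i k⟫
      ≤ G.dirichletEnergy (fun i => x i k) := fun k =>
    G.dirichletEnergy_add_inner_le (fun i => x i k) (fun i => xs i k)
  have hloss : ∀ i r, f (xs i (C i r)) (y i r)
      + ⟪f' (xs i (C i r)) (y i r), x i (C i r) - xs i (C i r)⟫ ≤ f (x i (C i r)) (y i r) :=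
    fun i r => (hf_convex (y i r)).add_inner_sub_le_of_hasGradientAt trivial trivial
      (hf_grad (xs i (C i r)) (y i r))
  have hgraph_sum := sum_le_sum fun k (_ : k ∈ univ) => hgraph k
  have hloss_sum := mul_le_mul_of_nonneg_left
    (sum_le_sum fun i (_ : i ∈ univ) => sum_le_sum fun r (_ : r ∈ univ) => hloss i r)
    (one_div_nonneg.2 hρ)
  simp only [sum_add_distrib, mul_add] at hgraph_sum hloss_sum
  rw [Jrho_eq_sum_dirichletEnergy_add, Jrho_eq_sum_dirichletEnergy_add, sum_inner_partialGradJ]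
  linarith

theorem Jrho_le_of_inU
    {f : EuclideanSpace ℝ (Fin d) → EuclideanSpace ℝ (Fin d) → ℝ}
    (hf_mono : ∀ x z y', ‖x - y'‖ ≤ ‖z - y'‖ → f x y' ≤ f z y')
    {ρ : ℝ} (hρ : 0 ≤ ρ) {x : Fin m → Fin K → EuclideanSpace ℝ (Fin d)}
    {C : (i : Fin m) → Fin (N i) → Fin K} (hU : inU y x C) (C' : (i : Fin m) → Fin (N i) → Fin K) :
    Jrho G y f ρ x C ≤ Jrho G y f ρ x C' := by
  rw [Jrho_eq_sum_dirichletEnergy_add, Jrho_eq_sum_dirichletEnergy_add]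
  gcongr with i _ r _
  exact hf_mono _ _ _ (hU i r (C' i r))

end Clustering

theorem fixed_point_no_improvement_general
    (d m K : ℕ)
    (G : SimpleGraph (Fin m)) [DecidableRel G.Adj]
    (N : Fin m → ℕ) (y : (i : Fin m) → Fin (N i) → EuclideanSpace ℝ (Fin d))
    (f : EuclideanSpace ℝ (Fin d) → EuclideanSpace ℝ (Fin d) → ℝ)
    (f' : EuclideanSpace ℝ (Fin d) → EuclideanSpace ℝ (Fin d) → EuclideanSpace ℝ (Fin d))
    (hf_convex : ∀ y', ConvexOn ℝ Set.univ (fun x => f x y'))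
    (hf_grad : ∀ z y', HasGradientAt (fun x => f x y') (f' z y') z)
    (hf_ord_lt : ∀ x z y', ‖x - y'‖ < ‖z - y'‖ → f x y' < f z y')
    (hf_ord_eq : ∀ x z y', ‖x - y'‖ = ‖z - y'‖ → f x y' = f z y')
    (ρ : ℝ) (hρ : 1 ≤ ρ)
    (xs : Fin m → Fin K → EuclideanSpace ℝ (Fin d))
    (Cs : (i : Fin m) → Fin (N i) → Fin K)
    (hU : inU y xs Cs) (hgz : gradJZero G y f' ρ xs Cs) :
    (∀ x : Fin m → Fin K → EuclideanSpace ℝ (Fin d),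
        Jrho G y f ρ xs Cs ≤ Jrho G y f ρ x Cs) ∧
    (∀ C : (i : Fin m) → Fin (N i) → Fin K,
        Jrho G y f ρ xs Cs ≤ Jrho G y f ρ xs C) := by
  have hρ₀ : 0 ≤ ρ := zero_le_one.trans hρ
  have hf_mono : ∀ x z y', ‖x - y'‖ ≤ ‖z - y'‖ → f x y' ≤ f z y' := fun x z y' h =>
    h.lt_or_eq.elim (fun h => (hf_ord_lt x z y' h).le) (fun h => (hf_ord_eq x z y' h).le)
  refine ⟨fun x => ?_, Jrho_le_of_inU G y hf_mono hρ₀ hU⟩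
  have hlin : ∑ i, ∑ k, ⟪partialGradJ G y f' ρ xs Cs i k, x i k - xs i k⟫ = 0 := by
    simp only [show ∀ i k, partialGradJ G y f' ρ xs Cs i k = 0 from hgz, inner_zero_left,
      sum_const_zero]
  simpa only [hlin, add_zero] using
    Jrho_add_sum_inner_partialGradJ_le G y hf_convex hf_grad hρ₀ xs x Cs

/-- **At a fixed point, neither the centers nor the clusters can be improved.** If `f` is
convex and differentiable in its first argument (with values in `[0,∞)`) and order-preserving
with respect to the Euclidean distance, `ρ ≥ 1`, and `(x⋆, C⋆)` is a fixed point of DGC-F_ρ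
(i.e. `C⋆ ∈ U_{x⋆}` and `∇_x J_ρ(x⋆, C⋆) = 0`), then `J_ρ(x⋆, C⋆) ≤ J_ρ(x, C⋆)` for all
centers `x` and `J_ρ(x⋆, C⋆) ≤ J_ρ(x⋆, C)` for all clusterings `C`. -/
theorem fixed_point_no_improvement
    (d m K : ℕ)
    (G : SimpleGraph (Fin m)) [DecidableRel G.Adj]
    (N : Fin m → ℕ) (y : (i : Fin m) → Fin (N i) → EuclideanSpace ℝ (Fin d))
    (f : EuclideanSpace ℝ (Fin d) → EuclideanSpace ℝ (Fin d) → ℝ)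
    (f' : EuclideanSpace ℝ (Fin d) → EuclideanSpace ℝ (Fin d) → EuclideanSpace ℝ (Fin d))
    (hf_nonneg : ∀ x y', 0 ≤ f x y')
    (hf_convex : ∀ y', ConvexOn ℝ Set.univ (fun x => f x y'))
    (hf_grad : ∀ z y', HasGradientAt (fun x => f x y') (f' z y') z)
    (hf_ord_lt : ∀ x z y', ‖x - y'‖ < ‖z - y'‖ → f x y' < f z y')
    (hf_ord_eq : ∀ x z y', ‖x - y'‖ = ‖z - y'‖ → f x y' = f z y')
    (ρ : ℝ) (hρ : 1 ≤ ρ)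
    (xs : Fin m → Fin K → EuclideanSpace ℝ (Fin d))
    (Cs : (i : Fin m) → Fin (N i) → Fin K)
    (hU : inU y xs Cs) (hgz : gradJZero G y f' ρ xs Cs) :
    (∀ x : Fin m → Fin K → EuclideanSpace ℝ (Fin d),
        Jrho G y f ρ xs Cs ≤ Jrho G y f ρ x Cs) ∧
    (∀ C : (i : Fin m) → Fin (N i) → Fin K,
        Jrho G y f ρ xs Cs ≤ Jrho G y f ρ xs C) :=
  fixed_point_no_improvement_general d m K G N y f f' hf_convex hf_grad hf_ord_lt hf_ord_eq ρ hρ xs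
    Cs hU hgz
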